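/- arXiv:1803.11420 — 2 statements merged into one kernel-verified Lean document; each statement's English description precedes it below -/
import Mathlib

section
/- Let β > 0, f_β(x) = (1/β) log(∑_{i=1}^n e^{β x_i}), and let P_t be the Ornstein-Uhlenbeck semigroup acting on bounded measurable functions on ℝⁿ. Then for every t ≥ 0 and every x ∈ ℝⁿ, ∑_{i,j=1}^n [P_t(∂_{ij}² f_β)(x)]² ≤ 2β² ∑_{i=1}^n [P_t(∂_i f_β)(x)]². -/
open MeasureTheory ProbabilityTheory

/-- The standard Gaussian measure on `ℝⁿ`. -/
noncomputable def gaussN (n : ℕ) : Measure (Fin n → ℝ) :=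
  Measure.pi fun _ => gaussianReal 0 1

/-- The Ornstein-Uhlenbeck semigroup. -/
noncomputable def OU (n : ℕ) (t : ℝ) (f : (Fin n → ℝ) → ℝ) (x : Fin n → ℝ) : ℝ :=
  ∫ y, f (fun i => Real.exp (-t) * x i + Real.sqrt (1 - Real.exp (-2 * t)) * y i) ∂(gaussN n)

/-- The log-sum-exp (free energy) function `f_β`. -/
noncomputable def lse (n : ℕ) (β : ℝ) (x : Fin n → ℝ) : ℝ :=
  (1 / β) * Real.log (∑ k, Real.exp (β * x k))

/-- First partial derivative `∂ᵢ f_β`. -/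
noncomputable def D1 (n : ℕ) (β : ℝ) (i : Fin n) (x : Fin n → ℝ) : ℝ :=
  fderiv ℝ (lse n β) x (Pi.single i 1)

/-- Second partial derivative `∂ᵢⱼ² f_β`. -/
noncomputable def D2 (n : ℕ) (β : ℝ) (i j : Fin n) (x : Fin n → ℝ) : ℝ :=
  fderiv ℝ (D1 n β i) x (Pi.single j 1)

namespace Stmt9Aux

variable {n : ℕ} {β : ℝ}

/-- The partition function. -/
noncomputable def S (n : ℕ) (β : ℝ) (x : Fin n → ℝ) : ℝ := ∑ k, Real.exp (β * x k)

/-- The Gibbs weights. -/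
noncomputable def p (n : ℕ) (β : ℝ) (i : Fin n) (x : Fin n → ℝ) : ℝ :=
  Real.exp (β * x i) / S n β x

lemma S_pos (i : Fin n) (x : Fin n → ℝ) : 0 < S n β x :=
  Finset.sum_pos' (fun _ _ => (Real.exp_pos _).le)
    ⟨i, Finset.mem_univ i, Real.exp_pos _⟩

lemma p_nonneg (i : Fin n) (x : Fin n → ℝ) : 0 ≤ p n β i x :=
  div_nonneg (Real.exp_pos _).le (S_pos i x).le

lemma p_le_one (i : Fin n) (x : Fin n → ℝ) : p n β i x ≤ 1 := by
  rw [p, div_le_one (S_pos i x)]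
  exact Finset.single_le_sum (f := fun k => Real.exp (β * x k))
    (fun _ _ => (Real.exp_pos _).le) (Finset.mem_univ i)

lemma sum_p (i : Fin n) (x : Fin n → ℝ) : ∑ j, p n β j x = 1 := by
  simp only [p]
  rw [← Finset.sum_div]
  exact div_self (S_pos i x).ne'

/-- Derivative of the partition function. -/
noncomputable def S' (n : ℕ) (β : ℝ) (x : Fin n → ℝ) : (Fin n → ℝ) →L[ℝ] ℝ :=
  ∑ k, (β * Real.exp (β * x k)) • (ContinuousLinearMap.proj k)

lemma S'_apply (x : Fin n → ℝ) (j : Fin n) :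
    S' n β x (Pi.single j 1) = β * Real.exp (β * x j) := by
  simp only [S', ContinuousLinearMap.sum_apply, ContinuousLinearMap.smul_apply,
    ContinuousLinearMap.proj_apply, Pi.single_apply, smul_eq_mul, mul_ite, mul_one, mul_zero]
  simp

lemma hasFDerivAt_exp_coord (k : Fin n) (x : Fin n → ℝ) :
    HasFDerivAt (fun x : Fin n → ℝ => Real.exp (β * x k))
      ((β * Real.exp (β * x k)) • (ContinuousLinearMap.proj k : (Fin n → ℝ) →L[ℝ] ℝ)) x := by
  have h1 : HasFDerivAt (fun x : Fin n → ℝ => x k)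
      (ContinuousLinearMap.proj k : (Fin n → ℝ) →L[ℝ] ℝ) x :=
    (ContinuousLinearMap.proj k : (Fin n → ℝ) →L[ℝ] ℝ).hasFDerivAt
  have h2 := h1.const_mul β
  have h3 := h2.exp
  rw [smul_smul, mul_comm (Real.exp (β * x k)) β] at h3
  exact h3

lemma hasFDerivAt_S (x : Fin n → ℝ) : HasFDerivAt (S n β) (S' n β x) x := by
  exact HasFDerivAt.fun_sum (fun k _ => hasFDerivAt_exp_coord k x)

lemma hasFDerivAt_lse (i : Fin n) (x : Fin n → ℝ) :
    HasFDerivAt (lse n β) ((1 / β) • ((S n β x)⁻¹ • S' n β x)) x :=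
  ((hasFDerivAt_S x).log (S_pos i x).ne').const_mul (1 / β)

lemma D1_eq (hβ : β ≠ 0) (i : Fin n) : D1 n β i = p n β i := by
  funext x
  rw [D1, (hasFDerivAt_lse i x).fderiv]
  rw [ContinuousLinearMap.smul_apply, ContinuousLinearMap.smul_apply, S'_apply]
  rw [p]
  have hS := (S_pos (β := β) i x).ne'
  rw [smul_eq_mul, smul_eq_mul]
  field_simp

lemma hasFDerivAt_p (i : Fin n) (x : Fin n → ℝ) :
    HasFDerivAt (p n β i)
      (Real.exp (β * x i) • (-((S n β x) ^ 2)⁻¹ • S' n β x) +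
        (S n β x)⁻¹ • ((β * Real.exp (β * x i)) •
          (ContinuousLinearMap.proj i : (Fin n → ℝ) →L[ℝ] ℝ))) x := by
  have hfun : p n β i = fun x => Real.exp (β * x i) * (S n β x)⁻¹ := by
    funext y; rw [p, div_eq_mul_inv]
  rw [hfun]
  have hinv : HasFDerivAt (fun x => (S n β x)⁻¹) (-((S n β x) ^ 2)⁻¹ • S' n β x) x :=
    (hasDerivAt_inv (S_pos (β := β) i x).ne').comp_hasFDerivAt x (hasFDerivAt_S x)
  exact (hasFDerivAt_exp_coord i x).mul hinv

lemma D2_eq (hβ : β ≠ 0) (i j : Fin n) (x : Fin n → ℝ) :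
    D2 n β i j x = β * ((if i = j then p n β i x else 0) - p n β i x * p n β j x) := by
  rw [D2, D1_eq hβ i, (hasFDerivAt_p i x).fderiv]
  have hS := (S_pos (β := β) i x).ne'
  rw [ContinuousLinearMap.add_apply, ContinuousLinearMap.smul_apply,
    ContinuousLinearMap.smul_apply, S'_apply, ContinuousLinearMap.smul_apply,
    ContinuousLinearMap.smul_apply, ContinuousLinearMap.proj_apply]
  simp only [Pi.single_apply, smul_eq_mul, p]
  by_cases h : i = j
  · subst h
    simp only [if_pos rfl, eq_self_iff_true, ite_true, ↓reduceIte]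
    field_simp
    ring
  · simp only [if_neg h]
    field_simp
    ring

lemma p_continuous (i : Fin n) : Continuous (p n β i) := by
  apply Continuous.div
  · exact Real.continuous_exp.comp (continuous_const.mul (continuous_apply i))
  · exact continuous_finset_sum _ fun k _ =>
      Real.continuous_exp.comp (continuous_const.mul (continuous_apply k))
  · exact fun x => (S_pos i x).ne'

instance gaussN_prob (n : ℕ) : IsProbabilityMeasure (gaussN n) := by
  unfold gaussN; infer_instance

section OUside

variable (t : ℝ) (x : Fin n → ℝ)

/-- The affine change of variables in the OU semigroup. -/
noncomputable def T (n : ℕ) (t : ℝ) (x : Fin n → ℝ) (y : Fin n → ℝ) : Fin n → ℝ :=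
  fun i => Real.exp (-t) * x i + Real.sqrt (1 - Real.exp (-2 * t)) * y i

lemma T_continuous : Continuous (T n t x) := by
  apply continuous_pi
  intro m
  exact continuous_const.add (continuous_const.mul (continuous_apply m))

lemma OU_eq_integral (f : (Fin n → ℝ) → ℝ) :
    OU n t f x = ∫ y, f (T n t x y) ∂(gaussN n) := rfl

lemma integrable_comp_T {g : (Fin n → ℝ) → ℝ} (hg : Continuous g) (C : ℝ)
    (hC : ∀ z, |g z| ≤ C) : Integrable (fun y => g (T n t x y)) (gaussN n) := by
  refine Integrable.mono' (integrable_const C)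
    ((hg.comp (T_continuous t x)).aestronglyMeasurable) ?_
  exact ae_of_all _ fun y => (Real.norm_eq_abs _) ▸ hC (T n t x y)

lemma integrable_p (i : Fin n) :
    Integrable (fun y => p n β i (T n t x y)) (gaussN n) := by
  refine integrable_comp_T t x (p_continuous i) 1 fun z => ?_
  rw [abs_of_nonneg (p_nonneg i z)]
  exact p_le_one i z

lemma integrable_pp (i j : Fin n) :
    Integrable (fun y => p n β i (T n t x y) * p n β j (T n t x y)) (gaussN n) := by
  refine integrable_comp_T t x ((p_continuous i).mul (p_continuous j)) 1 fun z => ?_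
  rw [Pi.mul_apply, abs_of_nonneg (mul_nonneg (p_nonneg i z) (p_nonneg j z))]
  exact mul_le_one₀ (p_le_one i z) (p_nonneg j z) (p_le_one j z)

end OUside

end Stmt9Aux

open Stmt9Aux in
theorem stmt9 (n : ℕ) (β : ℝ) (hβ : 0 < β) (t : ℝ) (ht : 0 ≤ t) (x : Fin n → ℝ) :
    ∑ i, ∑ j, (OU n t (D2 n β i j) x) ^ 2
      ≤ 2 * β ^ 2 * ∑ i, (OU n t (D1 n β i) x) ^ 2 := by
  have hβ' : β ≠ 0 := hβ.ne'
  -- abbreviations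
  set A : Fin n → ℝ := fun i => ∫ y, p n β i (T n t x y) ∂(gaussN n) with hA
  set B : Fin n → Fin n → ℝ :=
    fun i j => ∫ y, p n β i (T n t x y) * p n β j (T n t x y) ∂(gaussN n) with hB
  have hOUD1 : ∀ i, OU n t (D1 n β i) x = A i := by
    intro i
    rw [OU_eq_integral, D1_eq hβ' i]
  have hOUD2 : ∀ i j, OU n t (D2 n β i j) x
      = β * ((if i = j then A i else 0) - B i j) := by
    intro i j
    rw [OU_eq_integral]
    have hfun : ∀ y, D2 n β i j (T n t x y)
        = β * ((if i = j then p n β i (T n t x y) else 0)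
            - p n β i (T n t x y) * p n β j (T n t x y)) :=
      fun y => D2_eq hβ' i j _
    rw [integral_congr_ae (ae_of_all _ hfun)]
    rw [integral_const_mul]
    congr 1
    by_cases h : i = j
    · subst h
      simp only [if_pos rfl]
      exact integral_sub (integrable_p t x i) (integrable_pp t x i i)
    · simp only [if_neg h, zero_sub, zero_sub]
      rw [integral_neg]
  -- basic facts about A and B
  have hAnn : ∀ i, 0 ≤ A i := fun i =>
    integral_nonneg fun y => p_nonneg i _
  have hBnn : ∀ i j, 0 ≤ B i j := fun i j =>
    integral_nonneg fun y => mul_nonneg (p_nonneg i _) (p_nonneg j _)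
  have hBleA : ∀ i j, B i j ≤ A i := by
    intro i j
    apply integral_mono (integrable_pp t x i j) (integrable_p t x i)
    intro y
    calc p n β i (T n t x y) * p n β j (T n t x y)
        ≤ p n β i (T n t x y) * 1 :=
          mul_le_mul_of_nonneg_left (p_le_one j _) (p_nonneg i _)
      _ = p n β i (T n t x y) := mul_one _
  have hsumB : ∀ i, ∑ j, B i j = A i := by
    intro i
    rw [hB, ← integral_finset_sum _ (fun j _ => integrable_pp t x i j)]
    apply integral_congr_ae (ae_of_all _ _)
    intro y
    rw [← Finset.mul_sum, sum_p i, mul_one]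
  -- main estimate, per i
  have key : ∀ i, ∑ j, (OU n t (D2 n β i j) x) ^ 2 ≤ 2 * β ^ 2 * (A i) ^ 2 := by
    intro i
    have step1 : ∑ j, (OU n t (D2 n β i j) x) ^ 2
        ≤ ∑ j, β ^ 2 * (if j = i then (A i) ^ 2 else (B i j) ^ 2) := by
      apply Finset.sum_le_sum
      intro j _
      rw [hOUD2 i j, mul_pow]
      apply mul_le_mul_of_nonneg_left _ (sq_nonneg β)
      by_cases h : j = i
      · subst h
        have h1 : B j j ≤ A j := hBleA j j
        have h2 : 0 ≤ B j j := hBnn j j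
        simp only [eq_self_iff_true, if_true, if_pos rfl, ite_true]
        nlinarith
      · have hij : ¬ i = j := fun hh => h hh.symm
        rw [if_neg hij, if_neg h, zero_sub, neg_sq]
    have step2 : ∑ j, β ^ 2 * (if j = i then (A i) ^ 2 else (B i j) ^ 2)
        = β ^ 2 * ((A i) ^ 2 + ∑ j ∈ Finset.univ.erase i, (B i j) ^ 2) := by
      rw [← Finset.mul_sum]
      congr 1
      rw [← Finset.add_sum_erase _ _ (Finset.mem_univ i), if_pos rfl]
      congr 1
      apply Finset.sum_congr rfl
      intro j hj
      rw [if_neg (Finset.ne_of_mem_erase hj)]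
    have step3 : ∑ j ∈ Finset.univ.erase i, (B i j) ^ 2 ≤ (A i) ^ 2 := by
      calc ∑ j ∈ Finset.univ.erase i, (B i j) ^ 2
          ≤ ∑ j, (B i j) ^ 2 :=
            Finset.sum_le_sum_of_subset_of_nonneg (Finset.subset_univ _)
              (fun j _ _ => sq_nonneg _)
        _ ≤ (∑ j, B i j) ^ 2 :=
            Finset.sum_sq_le_sq_sum_of_nonneg (fun j _ => hBnn i j)
        _ = (A i) ^ 2 := by rw [hsumB i]
    calc ∑ j, (OU n t (D2 n β i j) x) ^ 2
        ≤ β ^ 2 * ((A i) ^ 2 + ∑ j ∈ Finset.univ.erase i, (B i j) ^ 2) :=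
          step1.trans (le_of_eq step2)
      _ ≤ β ^ 2 * ((A i) ^ 2 + (A i) ^ 2) := by
          apply mul_le_mul_of_nonneg_left _ (sq_nonneg β)
          linarith [step3]
      _ = 2 * β ^ 2 * (A i) ^ 2 := by ring
  calc ∑ i, ∑ j, (OU n t (D2 n β i j) x) ^ 2
      ≤ ∑ i, 2 * β ^ 2 * (A i) ^ 2 := Finset.sum_le_sum fun i _ => key i
    _ = 2 * β ^ 2 * ∑ i, (A i) ^ 2 := by rw [Finset.mul_sum]
    _ = 2 * β ^ 2 * ∑ i, (OU n t (D1 n β i) x) ^ 2 := by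
        congr 1
        exact Finset.sum_congr rfl fun i _ => by rw [hOUD1 i]
end

section
/- Let g : ℝⁿ → ℝ be smooth with ∇g ∈ L²(γₙ), and suppose that for all t ≥ 0, ∫ ‖Hess P_t g‖²_HS dγₙ ≤ 2β² e^{-2t} ∫ |∇ P_t g|² dγₙ. Then, with I(t) = ∫|∇P_t g|² dγₙ, one has the differential inequality I'(t) ≥ -2 I(t) - 4β² e^{-2t} I(t) for all t ≥ 0, and consequently I(t) ≤ I(0) exp(-2t + 2β²(1 - e^{-2t})) ≤ I(0) e^{2β²} e^{-2t}. -/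
open MeasureTheory ProbabilityTheory

/-- The squared Euclidean norm of the gradient, `|∇g|²`. -/
noncomputable def gradSq (n : ℕ) (g : (Fin n → ℝ) → ℝ) (x : Fin n → ℝ) : ℝ :=
  ∑ i, (fderiv ℝ g x (Pi.single i 1)) ^ 2

/-- The squared Hilbert-Schmidt norm of the Hessian, `‖Hess g‖²_HS`. -/
noncomputable def hessSq (n : ℕ) (g : (Fin n → ℝ) → ℝ) (x : Fin n → ℝ) : ℝ :=
  ∑ i, ∑ j, (fderiv ℝ (fun y => fderiv ℝ g y (Pi.single j 1)) x (Pi.single i 1)) ^ 2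

theorem stmt14 (n : ℕ) (β : ℝ) (g : (Fin n → ℝ) → ℝ) (hg : ContDiff ℝ (⊤ : ℕ∞) g)
    (hgrad : Integrable (gradSq n g) (gaussN n))
    (I H : ℝ → ℝ)
    (hIdef : ∀ t, I t = ∫ x, gradSq n (OU n t g) x ∂(gaussN n))
    (hHdef : ∀ t, H t = ∫ x, hessSq n (OU n t g) x ∂(gaussN n))
    (hderiv : ∀ t ≥ (0:ℝ), HasDerivAt I (-2 * (H t + I t)) t)
    (hhess : ∀ t ≥ (0:ℝ), H t ≤ 2 * β ^ 2 * Real.exp (-2 * t) * I t) :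
    (∀ t ≥ (0:ℝ), deriv I t ≥ -2 * I t - 4 * β ^ 2 * Real.exp (-2 * t) * I t)
    ∧ (∀ t ≥ (0:ℝ),
        I t ≤ I 0 * Real.exp (-2 * t + 2 * β ^ 2 * (1 - Real.exp (-2 * t)))
        ∧ I 0 * Real.exp (-2 * t + 2 * β ^ 2 * (1 - Real.exp (-2 * t)))
            ≤ I 0 * Real.exp (2 * β ^ 2) * Real.exp (-2 * t)) := by
  have hInn : ∀ t, 0 ≤ I t := by
    intro t
    rw [hIdef]
    exact integral_nonneg fun x => by unfold gradSq; positivity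
  have hHnn : ∀ t, 0 ≤ H t := by
    intro t
    rw [hHdef]
    exact integral_nonneg fun x => by unfold hessSq; positivity
  -- derivative of f t = I t * exp (2 t)
  set f : ℝ → ℝ := fun t => I t * Real.exp (2 * t) with hf
  have hfder : ∀ t ≥ (0:ℝ), HasDerivAt f (-2 * H t * Real.exp (2 * t)) t := by
    intro t ht
    have he : HasDerivAt (fun s : ℝ => Real.exp (2 * s)) (Real.exp (2 * t) * 2) t := by
      have : HasDerivAt (fun s : ℝ => 2 * s) 2 t := by
        simpa using (hasDerivAt_id t).const_mul 2
      simpa using this.exp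
    have : HasDerivAt f (-2 * (H t + I t) * Real.exp (2 * t) + I t * (Real.exp (2 * t) * 2)) t :=
      (hderiv t ht).fun_mul he
    convert this using 1
    ring
  have hanti : AntitoneOn f (Set.Ici 0) := by
    apply antitoneOn_of_deriv_nonpos (convex_Ici 0)
    · exact fun t ht => ((hfder t ht).continuousAt).continuousWithinAt
    · intro t ht
      rw [interior_Ici] at ht
      exact (hfder t (le_of_lt ht)).differentiableAt.differentiableWithinAt
    · intro t ht
      rw [interior_Ici] at ht
      rw [(hfder t (le_of_lt ht)).deriv]
      have := hHnn t
      have := Real.exp_pos (2 * t)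
      nlinarith
  have key : ∀ t ≥ (0:ℝ), I t ≤ I 0 * Real.exp (-2 * t) := by
    intro t ht
    have hft : f t ≤ f 0 := hanti (by simp) ht ht
    have : I t * Real.exp (2 * t) ≤ I 0 := by simpa [hf] using hft
    have h2 : Real.exp (-2 * t) * (I t * Real.exp (2 * t)) ≤ Real.exp (-2 * t) * I 0 :=
      mul_le_mul_of_nonneg_left this (Real.exp_pos _).le
    calc I t = Real.exp (-2 * t) * (I t * Real.exp (2 * t)) := by
            rw [← mul_assoc, mul_comm (Real.exp (-2*t)), mul_assoc, ← Real.exp_add]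
            simp
      _ ≤ Real.exp (-2 * t) * I 0 := h2
      _ = I 0 * Real.exp (-2 * t) := mul_comm _ _
  constructor
  · intro t ht
    rw [(hderiv t ht).deriv]
    have := hhess t ht
    nlinarith
  · intro t ht
    have hI0 : 0 ≤ I 0 := hInn 0
    have hexp : Real.exp (-2 * t) ≤ 1 := by
      rw [show (1:ℝ) = Real.exp 0 by simp]
      exact Real.exp_le_exp.mpr (by linarith)
    constructor
    · calc I t ≤ I 0 * Real.exp (-2 * t) := key t ht
        _ ≤ I 0 * Real.exp (-2 * t + 2 * β ^ 2 * (1 - Real.exp (-2 * t))) := by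
            apply mul_le_mul_of_nonneg_left _ hI0
            apply Real.exp_le_exp.mpr
            nlinarith [sq_nonneg β]
    · have hle : Real.exp (-2 * t + 2 * β ^ 2 * (1 - Real.exp (-2 * t)))
          ≤ Real.exp (2 * β ^ 2 + -2 * t) := by
        apply Real.exp_le_exp.mpr
        nlinarith [sq_nonneg β, Real.exp_pos (-2 * t)]
      calc I 0 * Real.exp (-2 * t + 2 * β ^ 2 * (1 - Real.exp (-2 * t)))
          ≤ I 0 * Real.exp (2 * β ^ 2 + -2 * t) := mul_le_mul_of_nonneg_left hle hI0
        _ = I 0 * Real.exp (2 * β ^ 2) * Real.exp (-2 * t) := by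
            rw [Real.exp_add]; ring
end
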